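/- For all n ≥ 1, T_{2n}·L_{n-1} = (1 + T_{2n-1})·L_n, where T_0 = 0, T_1 = 1, T_n = 6T_{n-1} - T_{n-2} and L_0 = 2, L_1 = 6, L_n = 6L_{n-1} - L_{n-2}. -/
import Mathlib


def T : ℕ → ℤ
  | 0 => 0
  | 1 => 1
  | (n+2) => 6 * T (n+1) - T n

def L : ℕ → ℤ
  | 0 => 2
  | 1 => 6
  | (n+2) => 6 * L (n+1) - L n

lemma hL : ∀ n : ℕ, L n = 2 * T (n+1) - 6 * T n := by
  have key : ∀ n : ℕ, L n = 2 * T (n+1) - 6 * T n ∧ L (n+1) = 2 * T (n+2) - 6 * T (n+1) := by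
    intro n
    induction n with
    | zero => simp [L, T]
    | succ k ih =>
      refine ⟨ih.2, ?_⟩
      show L (k+2) = 2 * T (k+3) - 6 * T (k+2)
      rw [show L (k+2) = 6 * L (k+1) - L k from rfl,
          show T (k+3) = 6 * T (k+2) - T (k+1) from rfl, ih.1, ih.2]
      have e : T (k+2) = 6 * T (k+1) - T k := rfl
      linarith [e]
  exact fun n => (key n).1

lemma key : ∀ n : ℕ, T (2*n) = T n * (2 * T (n+1) - 6 * T n) ∧
    1 + T (2*n+1) = T (n+1) * (2 * T (n+1) - 6 * T n) ∧
    T (n+1)^2 - 6 * T n * T (n+1) + T n ^ 2 = 1 := by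
  intro n
  induction n with
  | zero => simp [T]
  | succ k ih =>
    obtain ⟨h1, h2, h3⟩ := ih
    have e1 : 2 * (k+1) = (2*k) + 2 := by ring
    have e2 : T (2*k+2) = 6 * T (2*k+1) - T (2*k) := rfl
    have e3 : T (2*k+3) = 6 * T (2*k+2) - T (2*k+1) := rfl
    have e4 : T (k+2) = 6 * T (k+1) - T k := rfl
    refine ⟨?_, ?_, ?_⟩
    · rw [e1, e2, e4]; nlinarith [h1, h2, h3]
    · rw [show 2*(k+1)+1 = 2*k+3 by ring, e3, e2, e4]; nlinarith [h1, h2, h3]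
    · rw [e4]; nlinarith [h3]

theorem stmt16 (n : ℕ) (hn : 1 ≤ n) : T (2*n) * L (n-1) = (1 + T (2*n-1)) * L n := by
  obtain ⟨m, rfl⟩ := Nat.exists_eq_add_of_le hn
  rw [show 1 + m - 1 = m by omega, show 2*(1+m) - 1 = 2*m+1 by omega,
      show 1 + m = m + 1 by ring, hL m, hL (m+1)]
  obtain ⟨h1, h2, h3⟩ := key (m+1)
  obtain ⟨h1', h2', h3'⟩ := key m
  have e4 : T (m+1+1) = 6 * T (m+1) - T m := rfl
  rw [h1, h2', e4]
  ring
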